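/- Work in the discrete setting. Let L be a joint pmf of (X_j, X_{-j}, Y) on finite types, fix the coordinate j and an integer K ≥ 1. Let X_j^{(1)}, …, X_j^{(K)} be additional random variables, taking values in the same finite type as X_j, such that conditionally on (X_{-j}, Y) they are i.i.d. with conditional pmf L(X_j = · | X_{-j}, Y) and are conditionally independent of X_j given (X_{-j}, Y). Let T be any real-valued function of (x_j, x_{-j}, y), and set T_0 = T(X_j, X_{-j}, Y) and T_k = T(X_j^{(k)}, X_{-j}, Y) for k = 1, …, K. Then the p-value P = (1 + #{k ∈ {1, …, K} : T_k ≥ T_0}) / (K + 1) satisfies Prob(P ≤ α) ≤ α for every α ∈ [0, 1]. -/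

import Mathlib

/-!
Fix the context `(x, y)` of `(X_{-j}, Y)`. Conditionally on it, the observed `X_j` and the `K`
resamples are i.i.d. with law `L(· | x, y)`, so `T_0, …, T_K` is an exchangeable sequence, and
`(K + 1)` times the p-value is the upper rank `#{i | T_0 ≤ T_i}` of `T_0`. For every outcome at
most `c` indices have upper rank `≤ c` (the one of smallest value among them lies below all of
them), while by exchangeability every index has the same chance of doing so; hence `T_0` has
upper rank `≤ α (K + 1)` with conditional probability at most `α`. Averaging over `(x, y)`
gives the claim.
-/

open scoped Classical

open Finset

section Rank

variable {ι β : Type*} [Fintype ι] [LinearOrder β]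

def upperRank (g : ι → β) (i : ι) : ℕ := #{j | g i ≤ g j}

theorem card_upperRank_le (g : ι → β) {c : ℝ} (hc : 0 ≤ c) :
    (#{i | (upperRank g i : ℝ) ≤ c} : ℝ) ≤ c := by
  set A : Finset ι := {i | (upperRank g i : ℝ) ≤ c}
  rcases A.eq_empty_or_nonempty with hA | hA
  · simpa [hA] using hc
  obtain ⟨i₀, hi₀, hmin⟩ := A.exists_min_image g hA
  have hsub : A ⊆ ({j | g i₀ ≤ g j} : Finset ι) := fun j hj => by simpa using hmin j hj
  calc (#A : ℝ) ≤ upperRank g i₀ := by exact_mod_cast card_le_card hsub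
    _ ≤ c := (mem_filter.1 hi₀).2

theorem upperRank_comp_perm (g : ι → β) (σ : Equiv.Perm ι) (i : ι) :
    upperRank (g ∘ σ) i = upperRank g (σ i) :=
  card_equiv σ fun j => by simp

end Rank

section IID

variable {ι S : Type*} [Fintype ι] [DecidableEq ι] [Fintype S]

noncomputable def iidProb (q : S → ℝ) (E : (ι → S) → Prop) : ℝ := ∑ w ∈ {w | E w}, ∏ l, q (w l)

theorem iidProb_comp_perm (q : S → ℝ) (E : (ι → S) → Prop) (σ : Equiv.Perm ι) :
    iidProb q (fun w => E (w ∘ σ)) = iidProb q E := by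
  refine sum_equiv (σ.symm.arrowCongr (Equiv.refl S)) (fun w => by simp; rfl)
    fun w _ => ?_
  simp only [Equiv.arrowCongr_apply, Equiv.symm_symm, Equiv.coe_refl, Function.id_comp]
  exact (Equiv.prod_comp σ fun l => q (w l)).symm

theorem sum_iidProb_le {κ : Type*} [Fintype κ] {q : S → ℝ} (hq : ∀ s, 0 ≤ q s)
    (hq1 : ∑ s, q s = 1) (E : κ → (ι → S) → Prop) {c : ℝ}
    (hE : ∀ w, (#{i | E i w} : ℝ) ≤ c) :
    ∑ i, iidProb q (E i) ≤ c := by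
  calc ∑ i, iidProb q (E i)
      = ∑ w : ι → S, (#{i | E i w} : ℝ) * ∏ l, q (w l) := by
        simp only [iidProb, sum_filter]
        rw [sum_comm]
        simp [← sum_filter]
    _ ≤ ∑ w : ι → S, c * ∏ l, q (w l) :=
        sum_le_sum fun w _ => mul_le_mul_of_nonneg_right (hE w) (prod_nonneg fun l _ => hq _)
    _ = c := by rw [← mul_sum, ← Fintype.prod_sum (fun _ : ι => q), hq1, prod_const_one, mul_one]

theorem card_mul_iidProb_upperRank_le {β : Type*} [LinearOrder β] {q : S → ℝ}
    (hq : ∀ s, 0 ≤ q s) (hq1 : ∑ s, q s = 1) (f : S → β) {c : ℝ} (hc : 0 ≤ c) (i₀ : ι) :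
    Fintype.card ι * iidProb q (fun w => (upperRank (f ∘ w) i₀ : ℝ) ≤ c) ≤ c := by
  have hexch : ∀ i, iidProb q (fun w => (upperRank (f ∘ w) i : ℝ) ≤ c) =
      iidProb q (fun w => (upperRank (f ∘ w) i₀ : ℝ) ≤ c) := fun i => by
    rw [← iidProb_comp_perm q (fun w => (upperRank (f ∘ w) i₀ : ℝ) ≤ c) (Equiv.swap i₀ i)]
    congr! 3 with w
    rw [← Function.comp_assoc, upperRank_comp_perm, Equiv.swap_apply_left]
  calc Fintype.card ι * iidProb q (fun w => (upperRank (f ∘ w) i₀ : ℝ) ≤ c)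
      = ∑ i, iidProb q (fun w => (upperRank (f ∘ w) i : ℝ) ≤ c) := by
        rw [sum_congr rfl fun i _ => hexch i, sum_const, nsmul_eq_mul, card_univ]
    _ ≤ c := sum_iidProb_le hq hq1 _ fun w => card_upperRank_le (f ∘ w) hc

end IID

section Pvalue

variable {S β : Type*} [LinearOrder β]

theorem upperRank_comp_cons_zero {K : ℕ} (f : S → β) (t : S) (v : Fin K → S) :
    upperRank (f ∘ Fin.cons t v : Fin (K + 1) → β) 0 = 1 + #{k | f t ≤ f (v k)} := by
  rw [upperRank, Fin.card_filter_univ_succ]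
  simp [add_comm]

theorem sum_crt_pvalue_le [Fintype S] (K : ℕ) {q : S → ℝ} (hq : ∀ s, 0 ≤ q s)
    (hq1 : ∑ s, q s = 1) (f : S → β) {α : ℝ} (hα : 0 ≤ α) :
    ∑ t, ∑ v : Fin K → S,
      (if (1 + (#{k | f t ≤ f (v k)} : ℝ)) / (K + 1) ≤ α then q t * ∏ k, q (v k) else 0)
      ≤ α := by
  have hK : (0 : ℝ) < K + 1 := by positivity
  have hreindex : ∑ t, ∑ v : Fin K → S,
      (if (1 + (#{k | f t ≤ f (v k)} : ℝ)) / (K + 1) ≤ α then q t * ∏ k, q (v k) else 0) =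
      iidProb q (fun w : Fin (K + 1) → S => (upperRank (f ∘ w) 0 : ℝ) ≤ α * (K + 1)) := by
    rw [iidProb, sum_filter, ← Fintype.sum_prod_type']
    refine Fintype.sum_equiv (Fin.consEquiv fun _ => S) _ _ fun ⟨t, (v : Fin K → S)⟩ => ?_
    rw [show (Fin.consEquiv fun _ => S) (t, v) = Fin.cons t v from rfl, upperRank_comp_cons_zero,
      Fin.prod_univ_succ]
    simp only [div_le_iff₀ hK, Nat.cast_add, Nat.cast_one, Fin.cons_zero, Fin.cons_succ]
  have hrank := card_mul_iidProb_upperRank_le hq hq1 f (by positivity : 0 ≤ α * (K + 1))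
    (0 : Fin (K + 1))
  rw [Fintype.card_fin, Nat.cast_add_one, mul_comm] at hrank
  rw [hreindex]
  exact le_of_mul_le_mul_right hrank hK

end Pvalue

theorem sum_prod_four_eq_sum_slices {A B C D : Type*} [Fintype A] [Fintype B] [Fintype C]
    [Fintype D] (g : A × B × C × D → ℝ) :
    ∑ ω, g ω = ∑ b, ∑ c, ∑ a, ∑ d, g (a, b, c, d) := by
  simp only [Fintype.sum_prod_type]
  rw [sum_comm]
  exact sum_congr rfl fun b _ => sum_comm

theorem eq_mass_mul_prod_of_cond {A C D : Type*} [Fintype A] {K : ℕ}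
    {P : A × C × D × (Fin K → A) → ℝ} (hPnn : ∀ a, 0 ≤ P a) {L : A × C × D → ℝ}
    (hL : ∀ t x y, L (t, x, y) = ∑ v, P (t, x, y, v))
    (hcond : ∀ t x y v, 0 < (∑ s, L (s, x, y)) →
      P (t, x, y, v) / (∑ s, L (s, x, y)) =
        (L (t, x, y) / (∑ s, L (s, x, y))) * ∏ k, (L (v k, x, y) / (∑ s, L (s, x, y))))
    (t : A) (x : C) (y : D) (v : Fin K → A) :
    P (t, x, y, v) = (∑ s, L (s, x, y)) *
      ((L (t, x, y) / (∑ s, L (s, x, y))) * ∏ k, (L (v k, x, y) / (∑ s, L (s, x, y)))) := by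
  have hLnn : ∀ s, 0 ≤ L (s, x, y) := fun s => (hL s x y).symm ▸ sum_nonneg fun v _ => hPnn _
  rcases (sum_nonneg fun s _ => hLnn s).eq_or_lt with hzero | hpos
  · rw [← hzero, zero_mul]
    refine le_antisymm ?_ (hPnn _)
    calc P (t, x, y, v) ≤ L (t, x, y) :=
          (hL t x y).symm ▸ single_le_sum (fun v _ => hPnn (t, x, y, v)) (mem_univ v)
      _ ≤ ∑ s, L (s, x, y) := single_le_sum (fun s _ => hLnn s) (mem_univ t)
      _ = 0 := hzero.symm
  · rw [← hcond t x y v hpos, mul_div_cancel₀ _ hpos.ne']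

theorem crt_tilted_resampling_pvalue_superuniform_general
    {𝒳j 𝒳m 𝒴 : Type*} [Fintype 𝒳j] [Fintype 𝒳m] [Fintype 𝒴]
    (K : ℕ)
    -- joint pmf of (X_j, X_{-j}, Y, (X_j^{(1)}, …, X_j^{(K)}))
    (P : 𝒳j × 𝒳m × 𝒴 × (Fin K → 𝒳j) → ℝ)
    (hPnn : ∀ a, 0 ≤ P a)
    (hPsum : ∑ a, P a = 1)
    -- L is the joint pmf of (X_j, X_{-j}, Y)
    (L : 𝒳j × 𝒳m × 𝒴 → ℝ)
    (hL : ∀ t x y, L (t, x, y) = ∑ v, P (t, x, y, v))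
    -- conditionally on (X_{-j}, Y), the resamples X_j^{(1)}, …, X_j^{(K)} are i.i.d. with
    -- conditional pmf L(X_j = · | X_{-j}, Y) and conditionally independent of X_j
    (hcond : ∀ t x y v, 0 < (∑ s, L (s, x, y)) →
      P (t, x, y, v) / (∑ s, L (s, x, y)) =
        (L (t, x, y) / (∑ s, L (s, x, y))) *
          ∏ k, (L (v k, x, y) / (∑ s, L (s, x, y))))
    -- an arbitrary real-valued test statistic
    (T : 𝒳j → 𝒳m → 𝒴 → ℝ)
    -- the p-value P = (1 + #{k : T_k ≥ T_0}) / (K + 1)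
    (Pval : 𝒳j × 𝒳m × 𝒴 × (Fin K → 𝒳j) → ℝ)
    (hPval : ∀ t x y v, Pval (t, x, y, v) =
      (1 + ((Finset.univ.filter
        (fun k : Fin K => T t x y ≤ T (v k) x y)).card : ℝ)) / (K + 1)) :
    ∀ α : ℝ, 0 ≤ α → α ≤ 1 →
      ∑ ω ∈ Finset.univ.filter (fun ω => Pval ω ≤ α), P ω ≤ α := by
  intro α hα _
  set M : 𝒳m → 𝒴 → ℝ := fun x y => ∑ s, L (s, x, y)
  have hLnn : ∀ t x y, 0 ≤ L (t, x, y) := fun t x y =>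
    (hL t x y).symm ▸ sum_nonneg fun v _ => hPnn _
  have hM1 : ∑ x, ∑ y, M x y = 1 := by
    simp only [M, hL, ← hPsum, sum_prod_four_eq_sum_slices (fun ω => P ω)]
  have hslice : ∀ x y, ∑ t, ∑ v, (if Pval (t, x, y, v) ≤ α then P (t, x, y, v) else 0)
      ≤ α * M x y := by
    intro x y
    set q : 𝒳j → ℝ := fun s => L (s, x, y) / M x y
    have hfactor : ∑ t, ∑ v, (if Pval (t, x, y, v) ≤ α then P (t, x, y, v) else 0) =
        M x y * ∑ t, ∑ v : Fin K → 𝒳j, (if (1 + (#{k | T t x y ≤ T (v k) x y} : ℝ)) / (K + 1) ≤ α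
          then q t * ∏ k, q (v k) else 0) := by
      simp only [hPval, eq_mass_mul_prod_of_cond hPnn hL hcond, mul_sum, mul_ite_zero]
      rfl
    rw [hfactor]
    rcases (sum_nonneg fun s _ => hLnn s x y : 0 ≤ M x y).eq_or_lt with hzero | hpos
    · simp [M, ← hzero]
    · rw [mul_comm α]
      refine mul_le_mul_of_nonneg_left (sum_crt_pvalue_le K (fun s => ?_) ?_ _ hα) hpos.le
      · exact div_nonneg (hLnn s x y) hpos.le
      · rw [← sum_div, div_self hpos.ne']
  calc ∑ ω ∈ univ.filter (fun ω => Pval ω ≤ α), P ω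
      = ∑ x, ∑ y, ∑ t, ∑ v, (if Pval (t, x, y, v) ≤ α then P (t, x, y, v) else 0) := by
        rw [sum_filter, sum_prod_four_eq_sum_slices]
    _ ≤ ∑ x, ∑ y, α * M x y := sum_le_sum fun x _ => sum_le_sum fun y _ => hslice x y
    _ = α := by simp only [← mul_sum, hM1, mul_one]

/-- **Proposition 2 (discrete form).** In a conditional randomization test on a biased sample
with sample distribution `L`, resampling the `j`-th covariate from the sample conditional law
`L(X_j | X_{-j}, Y)` produces valid, super-uniform p-values. -/
theorem crt_tilted_resampling_pvalue_superuniform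
    {𝒳j 𝒳m 𝒴 : Type*} [Fintype 𝒳j] [Fintype 𝒳m] [Fintype 𝒴]
    [Nonempty 𝒳j] [Nonempty 𝒳m] [Nonempty 𝒴]
    (K : ℕ) (hK : 1 ≤ K)
    -- joint pmf of (X_j, X_{-j}, Y, (X_j^{(1)}, …, X_j^{(K)}))
    (P : 𝒳j × 𝒳m × 𝒴 × (Fin K → 𝒳j) → ℝ)
    (hPnn : ∀ a, 0 ≤ P a)
    (hPsum : ∑ a, P a = 1)
    -- L is the joint pmf of (X_j, X_{-j}, Y)
    (L : 𝒳j × 𝒳m × 𝒴 → ℝ)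
    (hL : ∀ t x y, L (t, x, y) = ∑ v, P (t, x, y, v))
    -- conditionally on (X_{-j}, Y), the resamples X_j^{(1)}, …, X_j^{(K)} are i.i.d. with
    -- conditional pmf L(X_j = · | X_{-j}, Y) and conditionally independent of X_j
    (hcond : ∀ t x y v, 0 < (∑ s, L (s, x, y)) →
      P (t, x, y, v) / (∑ s, L (s, x, y)) =
        (L (t, x, y) / (∑ s, L (s, x, y))) *
          ∏ k, (L (v k, x, y) / (∑ s, L (s, x, y))))
    -- an arbitrary real-valued test statistic
    (T : 𝒳j → 𝒳m → 𝒴 → ℝ)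
    -- the p-value P = (1 + #{k : T_k ≥ T_0}) / (K + 1)
    (Pval : 𝒳j × 𝒳m × 𝒴 × (Fin K → 𝒳j) → ℝ)
    (hPval : ∀ t x y v, Pval (t, x, y, v) =
      (1 + ((Finset.univ.filter
        (fun k : Fin K => T t x y ≤ T (v k) x y)).card : ℝ)) / (K + 1)) :
    ∀ α : ℝ, 0 ≤ α → α ≤ 1 →
      ∑ ω ∈ Finset.univ.filter (fun ω => Pval ω ≤ α), P ω ≤ α :=
  crt_tilted_resampling_pvalue_superuniform_general K P hPnn hPsum L hL hcond T Pval hPval
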